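/- For a bounded function f : [0,1] → ℝ with C = sup_{t∈[0,1]} |f(t)|, and any two tagged partitions (Π₁,T₁), (Π₂,T₂) ∈ TP[0,1], one has |S(f,Π₁,T₁) − S(f,Π₂,T₂)| ≤ C · ρ((Π₁,T₁),(Π₂,T₂)). -/

import Mathlib

/-!
Grouping the subintervals of each partition by their tag writes both Riemann sums as sums
over the common tag set `T₁ ∪ T₂`, with weight `ℓ(Π, T, τ)` at `τ` (zero when `τ` is not a tag).
The difference is then `Σ_τ f(τ) (ℓ₁(τ) − ℓ₂(τ))`, and `Σ_τ |ℓ₁(τ) − ℓ₂(τ)|` over `T₁ ∪ T₂`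
is exactly `ρ`, splitting `T₁ ∪ T₂` into `T₁ ∩ T₂`, `T₁ ∖ T₂` and `T₂ ∖ T₁`.
-/

open Filter Topology

/-- A tagged partition of the segment `[a, b]`:
points `a = ξ₀ ≤ ξ₁ ≤ ... ≤ ξₙ = b` together with tags `tₖ ∈ [ξₖ₋₁, ξₖ]`. -/
structure TaggedPartition (a b : ℝ) where
  n : ℕ
  pts : Fin (n + 1) → ℝ
  mono : Monotone pts
  first : pts 0 = a
  last : pts (Fin.last n) = b
  tag : Fin n → ℝ
  tag_ge : ∀ k : Fin n, pts k.castSucc ≤ tag k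
  tag_le : ∀ k : Fin n, tag k ≤ pts k.succ

namespace TaggedPartition

variable {a b : ℝ}

/-- Length `Δₖ = ξₖ - ξₖ₋₁` of the `k`-th subinterval. -/
def len (P : TaggedPartition a b) (k : Fin P.n) : ℝ :=
  P.pts k.succ - P.pts k.castSucc

/-- Riemann sum `S(f, Π, T) = Σₖ f(tₖ)·Δₖ`. -/
def RS (f : ℝ → ℝ) (P : TaggedPartition a b) : ℝ :=
  ∑ k, f (P.tag k) * P.len k

/-- `d(Π) < δ`: every subinterval has length `< δ`. -/
def diamLT (P : TaggedPartition a b) (δ : ℝ) : Prop :=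
  ∀ k : Fin P.n, P.len k < δ

/-- `ℓ(Π, T, τ)`: total length of the subintervals whose tag is `τ`
(`0` if `τ` is not a tag). -/
noncomputable def tagLen (P : TaggedPartition a b) (τ : ℝ) : ℝ :=
  ∑ k ∈ Finset.univ.filter (fun k => P.tag k = τ), P.len k

/-- The (finite) set of tags of a tagged partition. -/
noncomputable def tagSet (P : TaggedPartition a b) : Finset ℝ :=
  Finset.image P.tag Finset.univ

/-- The distance
`ρ((Π₁,T₁),(Π₂,T₂)) = Σ_{t∈T₁∩T₂}|Δ₁(t)−Δ₂(t)| + Σ_{t∈T₁∖T₂}Δ₁(t) + Σ_{t∈T₂∖T₁}Δ₂(t)`. -/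
noncomputable def ρ (P Q : TaggedPartition a b) : ℝ :=
  ∑ τ ∈ P.tagSet ∩ Q.tagSet, |P.tagLen τ - Q.tagLen τ|
    + ∑ τ ∈ P.tagSet \ Q.tagSet, P.tagLen τ
    + ∑ τ ∈ Q.tagSet \ P.tagSet, Q.tagLen τ

end TaggedPartition

/-- Tagged partitions of `[0,1]`. -/
abbrev TP01 := TaggedPartition 0 1

/-- The filter `𝔉_{<δ}` on `TP[0,1]` generated by the base
`P_{<δ} = {(Π,T) : d(Π) < δ}`, `δ > 0`; convergence of Riemann sums along it
is Riemann integrability. -/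
noncomputable def riemannFilter : Filter TP01 :=
  ⨅ δ ∈ Set.Ioi (0 : ℝ), Filter.principal {P : TP01 | P.diamLT δ}

/-- `𝔉₂` ρ-dominates `𝔉₁`. -/
def RhoDominates (F₂ F₁ : Filter TP01) : Prop :=
  ∀ ε > (0:ℝ), ∀ A₁ ∈ F₁, ∃ A₂ ∈ F₂, ∀ Q ∈ A₂, ∃ P ∈ A₁, TaggedPartition.ρ P Q < ε

namespace TaggedPartition

variable {a b : ℝ}

lemma len_nonneg (P : TaggedPartition a b) (k : Fin P.n) : 0 ≤ P.len k :=
  sub_nonneg.2 (P.mono (Fin.castSucc_le_succ k))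

lemma tagLen_nonneg (P : TaggedPartition a b) (τ : ℝ) : 0 ≤ P.tagLen τ :=
  Finset.sum_nonneg fun k _ => P.len_nonneg k

lemma tagLen_of_notMem_tagSet (P : TaggedPartition a b) {τ : ℝ} (h : τ ∉ P.tagSet) :
    P.tagLen τ = 0 :=
  Finset.sum_eq_zero fun k hk =>
    absurd (Finset.mem_image.2 ⟨k, Finset.mem_univ k, (Finset.mem_filter.1 hk).2⟩) h

lemma tag_mem_Icc (P : TaggedPartition a b) (k : Fin P.n) : P.tag k ∈ Set.Icc a b :=
  ⟨P.first.symm.trans_le ((P.mono (Fin.zero_le _)).trans (P.tag_ge k)),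
    ((P.tag_le k).trans (P.mono (Fin.le_last _))).trans_eq P.last⟩

lemma mem_Icc_of_mem_tagSet (P : TaggedPartition a b) {τ : ℝ} (hτ : τ ∈ P.tagSet) :
    τ ∈ Set.Icc a b := by
  obtain ⟨k, -, rfl⟩ := Finset.mem_image.1 hτ
  exact P.tag_mem_Icc k

lemma RS_eq_sum_tagSet (f : ℝ → ℝ) (P : TaggedPartition a b) :
    P.RS f = ∑ τ ∈ P.tagSet, f τ * P.tagLen τ := by
  refine (Finset.sum_image' (fun k => f (P.tag k) * P.len k) fun τ _ => ?_).symm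
  rw [tagLen, Finset.mul_sum]
  exact Finset.sum_congr rfl fun k hk => by rw [(Finset.mem_filter.1 hk).2]

lemma RS_eq_sum_of_tagSet_subset (f : ℝ → ℝ) (P : TaggedPartition a b) {s : Finset ℝ}
    (hs : P.tagSet ⊆ s) : P.RS f = ∑ τ ∈ s, f τ * P.tagLen τ := by
  rw [RS_eq_sum_tagSet]
  exact Finset.sum_subset hs fun τ _ hτ => by rw [P.tagLen_of_notMem_tagSet hτ, mul_zero]

lemma RS_sub_RS_eq_sum (f : ℝ → ℝ) (P Q : TaggedPartition a b) :
    P.RS f - Q.RS f = ∑ τ ∈ P.tagSet ∪ Q.tagSet, f τ * (P.tagLen τ - Q.tagLen τ) := by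
  rw [P.RS_eq_sum_of_tagSet_subset f Finset.subset_union_left,
    Q.RS_eq_sum_of_tagSet_subset f Finset.subset_union_right, ← Finset.sum_sub_distrib]
  simp only [mul_sub]

lemma ρ_eq_sum_union (P Q : TaggedPartition a b) :
    ρ P Q = ∑ τ ∈ P.tagSet ∪ Q.tagSet, |P.tagLen τ - Q.tagLen τ| := by
  have onlyP : ∀ τ ∈ P.tagSet \ Q.tagSet, |P.tagLen τ - Q.tagLen τ| = P.tagLen τ :=
    fun τ hτ => by
      rw [Q.tagLen_of_notMem_tagSet (Finset.mem_sdiff.1 hτ).2, sub_zero,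
        abs_of_nonneg (P.tagLen_nonneg τ)]
  have onlyQ : ∀ τ ∈ Q.tagSet \ P.tagSet, |P.tagLen τ - Q.tagLen τ| = Q.tagLen τ :=
    fun τ hτ => by
      rw [P.tagLen_of_notMem_tagSet (Finset.mem_sdiff.1 hτ).2, zero_sub, abs_neg,
        abs_of_nonneg (Q.tagLen_nonneg τ)]
  rw [ρ, ← Finset.sum_congr rfl onlyP, ← Finset.sum_congr rfl onlyQ,
    Finset.sum_inter_add_sum_sdiff, ← Finset.sum_union Finset.disjoint_sdiff,
    Finset.union_sdiff_self_eq_union]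

theorem abs_RS_sub_RS_le_mul_ρ (f : ℝ → ℝ) {C : ℝ} (P Q : TaggedPartition a b)
    (hf : ∀ τ ∈ P.tagSet ∪ Q.tagSet, |f τ| ≤ C) :
    |P.RS f - Q.RS f| ≤ C * ρ P Q := by
  rw [RS_sub_RS_eq_sum, ρ_eq_sum_union, Finset.mul_sum]
  refine (Finset.abs_sum_le_sum_abs _ _).trans (Finset.sum_le_sum fun τ hτ => ?_)
  rw [abs_mul]
  exact mul_le_mul_of_nonneg_right (hf τ hτ) (abs_nonneg _)

end TaggedPartition

/-- Key estimate: for bounded `f` with `C = sup_{t∈[0,1]} |f t|`,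
`|S(f,Π₁,T₁) − S(f,Π₂,T₂)| ≤ C · ρ((Π₁,T₁),(Π₂,T₂))`. -/
theorem riemann_sum_diff_le_rho (f : ℝ → ℝ) (C : ℝ)
    (hC : IsLUB ((fun t => |f t|) '' Set.Icc (0:ℝ) 1) C)
    (P Q : TP01) :
    |TaggedPartition.RS f P - TaggedPartition.RS f Q| ≤ C * TaggedPartition.ρ P Q := by
  refine P.abs_RS_sub_RS_le_mul_ρ f Q fun τ hτ => hC.1 ⟨τ, ?_, rfl⟩
  rcases Finset.mem_union.1 hτ with hτ | hτ
  exacts [P.mem_Icc_of_mem_tagSet hτ, Q.mem_Icc_of_mem_tagSet hτ]
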